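/- arXiv:1910.00810 — 2 statements merged into one kernel-verified Lean document; each statement's English description precedes it below -/
import Mathlib

section
/- Let m−1 ≥ c(r−1) and let Ŝ be chosen uniformly at random among full-rank matrices in F_q^{(m−1)×(r−1)}. Fix c disjoint subsets T_1,…,T_c ⊆ {1..m−1}, each of size r−1. Then the probability that all c square blocks Ŝ_{T_i, ·} are singular is at most (1 − p_{q,r−1,r−1})^c / p_{q,r−1,m−1}, where p_{q,a,b} = ∏_{i=0}^{a−1}(1 − q^{i−b}). -/
open Finset

section Aux
variable {F : Type*} [Field F] [Fintype F]

lemma rank_eq_iff_li' {n k : ℕ} (S : Matrix (Fin n) (Fin k) F) :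
    S.rank = k ↔ LinearIndependent F S.transpose := by
  rw [Matrix.rank_eq_finrank_span_cols]
  change _ ↔ LinearIndependent F (fun i : Fin k => (S.transpose i : Fin n → F))
  rw [linearIndependent_iff_card_eq_finrank_span,
    Fintype.card_fin, Set.finrank]
  exact eq_comm

lemma card_fullrank' {n k : ℕ} (hk : k ≤ n) :
    Nat.card {S : Matrix (Fin n) (Fin k) F // S.rank = k} =
      ∏ i ∈ Finset.range k, (Fintype.card F ^ n - Fintype.card F ^ i) := by
  have e : {S : Matrix (Fin n) (Fin k) F // S.rank = k} ≃
      {s : Fin k → (Fin n → F) // LinearIndependent F s} :=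
    { toFun := fun S => ⟨S.1.transpose, (rank_eq_iff_li' S.1).1 S.2⟩
      invFun := fun s => ⟨Matrix.of (fun i j => s.1 j i), by
        rw [rank_eq_iff_li']; exact s.2⟩
      left_inv := fun S => rfl
      right_inv := fun s => rfl }
  rw [Nat.card_congr e, card_linearIndependent
    (by simpa [Module.finrank_fintype_fun_eq_card] using hk)]
  rw [← Fin.prod_univ_eq_prod_range]
  simp [Module.finrank_fintype_fun_eq_card]

lemma card_det_ne_zero' {k : ℕ} :
    Nat.card {A : Matrix (Fin k) (Fin k) F // A.det ≠ 0} =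
      ∏ i ∈ Finset.range k, (Fintype.card F ^ k - Fintype.card F ^ i) := by
  rw [← card_fullrank' le_rfl]
  apply Nat.card_congr
  apply Equiv.subtypeEquivRight
  intro A
  constructor
  · intro h
    have : IsUnit A := (Matrix.isUnit_iff_isUnit_det A).2 (isUnit_iff_ne_zero.2 h)
    simpa using Matrix.rank_of_isUnit A this
  · intro h hdet
    rw [rank_eq_iff_li'] at h
    obtain ⟨v, hvne, hmul⟩ := Matrix.exists_mulVec_eq_zero_iff.2 hdet
    apply hvne
    have hz : ∑ j, v j • A.transpose j = 0 := by
      funext i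
      have := congrFun hmul i
      simpa [Matrix.mulVec, dotProduct, Matrix.transpose, mul_comm,
        Finset.sum_apply] using this
    have := Fintype.linearIndependent_iff.1 h v hz
    funext j
    exact this j

open Classical in
lemma card_det_zero' {k : ℕ} :
    Nat.card {A : Matrix (Fin k) (Fin k) F // A.det = 0} =
      Fintype.card F ^ (k * k) -
        ∏ i ∈ Finset.range k, (Fintype.card F ^ k - Fintype.card F ^ i) := by
  have htot : Fintype.card (Matrix (Fin k) (Fin k) F) = Fintype.card F ^ (k * k) := by
    rw [← Nat.card_eq_fintype_card, Nat.card_congr (Matrix.of (m := Fin k) (n := Fin k)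
      (α := F)).symm, Nat.card_fun, Nat.card_fun]
    simp [pow_mul, Nat.card_eq_fintype_card]
  have h1 : Nat.card {A : Matrix (Fin k) (Fin k) F // ¬ (A.det ≠ 0)} =
      Fintype.card F ^ (k * k) -
        ∏ i ∈ Finset.range k, (Fintype.card F ^ k - Fintype.card F ^ i) := by
    rw [Nat.card_eq_fintype_card, Fintype.card_subtype_compl, htot]
    congr 1
    rw [← Nat.card_eq_fintype_card, card_det_ne_zero']
  rw [← h1]
  exact Nat.card_congr (Equiv.subtypeEquivRight (by intro A; tauto))

end Aux

lemma cast_prod_pow_q {q n k : ℕ} (hq : 1 ≤ q) (hk : k ≤ n) :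
    ((∏ i ∈ Finset.range k, (q ^ n - q ^ i) : ℕ) : ℚ) =
      (q : ℚ) ^ (n * k) * ∏ i ∈ Finset.range k, (1 - (q : ℚ) ^ ((i : ℤ) - (n : ℤ))) := by
  have hq0 : (q : ℚ) ≠ 0 := Nat.cast_ne_zero.2 (by omega)
  have key : ∀ i ∈ Finset.range k,
      ((q ^ n - q ^ i : ℕ) : ℚ) = (q : ℚ) ^ n * (1 - (q : ℚ) ^ ((i : ℤ) - (n : ℤ))) := by
    intro i hi
    have hle : q ^ i ≤ q ^ n := Nat.pow_le_pow_right (by omega) (by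
      have := Finset.mem_range.1 hi; omega)
    have h2 : (q : ℚ) ^ n * (q : ℚ) ^ ((i : ℤ) - (n : ℤ)) = (q : ℚ) ^ i := by
      rw [← zpow_natCast (q : ℚ) n, ← zpow_add₀ hq0, ← zpow_natCast (q : ℚ) i]
      congr 1
      omega
    rw [Nat.cast_sub hle]
    push_cast
    rw [mul_sub, mul_one, h2]
  rw [Nat.cast_prod, Finset.prod_congr rfl key, Finset.prod_mul_distrib,
    Finset.prod_const, Finset.card_range, ← pow_mul]

lemma q_prod_pos {q n k : ℕ} (hq : 2 ≤ q) (hk : k ≤ n) :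
    0 < ∏ i ∈ Finset.range k, (1 - (q : ℚ) ^ ((i : ℤ) - (n : ℤ))) := by
  apply Finset.prod_pos
  intro i hi
  have h1 : (1 : ℚ) < q := by exact_mod_cast hq
  have : (q : ℚ) ^ ((i : ℤ) - (n : ℤ)) < (q : ℚ) ^ (0 : ℤ) := by
    apply zpow_lt_zpow_right₀ h1
    have := Finset.mem_range.1 hi
    omega
  simpa using this

lemma q_prod_le_one {q n k : ℕ} (hq : 2 ≤ q) (hk : k ≤ n) :
    ∏ i ∈ Finset.range k, (1 - (q : ℚ) ^ ((i : ℤ) - (n : ℤ))) ≤ 1 := by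
  apply Finset.prod_le_one
  · intro i hi
    have h1 : (1 : ℚ) ≤ q := by exact_mod_cast Nat.one_le_of_lt hq
    have h2 : (1:ℚ) < q := by exact_mod_cast hq
    have h3 : (q : ℚ) ^ ((i : ℤ) - (n : ℤ)) ≤ (q : ℚ) ^ (0 : ℤ) := by
      apply zpow_le_zpow_right₀ h2.le
      have := Finset.mem_range.1 hi
      omega
    rw [zpow_zero] at h3
    linarith
  · intro i hi
    have : (0 : ℚ) < (q : ℚ) ^ ((i : ℤ) - (n : ℤ)) := by positivity
    linarith


/-- Let `Ŝ` be uniform among full-rank `(m−1) × (r−1)` matrices over `F_q`, and fix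
`c` pairwise disjoint row subsets `T_1,…,T_c`, each of size `r−1` (possible since
`c(r−1) ≤ m−1`). The probability that all `c` square blocks `Ŝ_{T_i,·}` are singular
is at most `(1 − p_{q,r−1,r−1})^c / p_{q,r−1,m−1}`, where
`p_{q,a,b} = ∏_{i=0}^{a−1}(1 − q^{i−b})`. -/
theorem prob_all_blocks_singular {F : Type*} [Field F] [Fintype F] {m r c : ℕ}
    (hm : 1 ≤ m) (hr : 1 ≤ r) (hc : 1 ≤ c) (hcm : c * (r - 1) ≤ m - 1)
    (q : ℕ) (hq : q = Fintype.card F)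
    (T : Fin c → Finset (Fin (m - 1))) (hTcard : ∀ i, (T i).card = r - 1)
    (hTdisj : Pairwise (Function.onFun Disjoint T)) :
    (Nat.card {S : Matrix (Fin (m - 1)) (Fin (r - 1)) F // S.rank = r - 1 ∧
          ∀ i : Fin c,
            (S.submatrix (fun l : Fin (r - 1) => (T i).orderEmbOfFin (hTcard i) l) id).det
              = 0} : ℚ) /
        (Nat.card {S : Matrix (Fin (m - 1)) (Fin (r - 1)) F // S.rank = r - 1} : ℚ) ≤
      (1 - ∏ i ∈ Finset.range (r - 1),
          (1 - (q : ℚ) ^ ((i : ℤ) - ((r - 1 : ℕ) : ℤ)))) ^ c /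
        ∏ i ∈ Finset.range (r - 1),
          (1 - (q : ℚ) ^ ((i : ℤ) - ((m - 1 : ℕ) : ℤ))) := by
  classical
  have hq2 : 2 ≤ q := by rw [hq]; exact Fintype.one_lt_card
  have hkn : r - 1 ≤ m - 1 := le_trans (Nat.le_mul_of_pos_left (r - 1) hc) hcm
  have hq0 : (q : ℚ) ≠ 0 := Nat.cast_ne_zero.2 (by omega)
  have hqpos : (0 : ℚ) < q := by positivity
  set Pk : ℚ := ∏ i ∈ Finset.range (r - 1),
      (1 - (q : ℚ) ^ ((i : ℤ) - ((r - 1 : ℕ) : ℤ))) with hPk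
  set Pn : ℚ := ∏ i ∈ Finset.range (r - 1),
      (1 - (q : ℚ) ^ ((i : ℤ) - ((m - 1 : ℕ) : ℤ))) with hPn
  have hPn_pos : 0 < Pn := q_prod_pos hq2 hkn
  have hPk_pos : 0 < Pk := q_prod_pos hq2 le_rfl
  have hPk_le : Pk ≤ 1 := q_prod_le_one hq2 le_rfl
  -- denominator count
  have hden : (Nat.card {S : Matrix (Fin (m - 1)) (Fin (r - 1)) F // S.rank = r - 1} : ℚ) =
      (q : ℚ) ^ ((m - 1) * (r - 1)) * Pn := by
    rw [card_fullrank' hkn, ← hq]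
    exact cast_prod_pow_q (by omega) hkn
  -- the union of the row sets
  set U : Finset (Fin (m - 1)) := Finset.univ.biUnion T with hU
  have hUcard : U.card = c * (r - 1) := by
    rw [hU, Finset.card_biUnion (fun i _ j _ hij => hTdisj hij)]
    simp [hTcard, mul_comm]
  have hUc : (Uᶜ : Finset (Fin (m - 1))).card = (m - 1) - c * (r - 1) := by
    rw [Finset.card_compl, hUcard, Fintype.card_fin]
  -- numerator bound via injection
  have hinj : Nat.card {S : Matrix (Fin (m - 1)) (Fin (r - 1)) F // S.rank = r - 1 ∧
        ∀ i : Fin c,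
          (S.submatrix (fun l : Fin (r - 1) =>
            (T i).orderEmbOfFin (hTcard i) l) id).det = 0} ≤
      Nat.card ((Fin c → {A : Matrix (Fin (r - 1)) (Fin (r - 1)) F // A.det = 0}) ×
        ({x // x ∈ (Uᶜ : Finset (Fin (m - 1)))} → Fin (r - 1) → F)) := by
    apply Nat.card_le_card_of_injective
      (fun S => (fun i => ⟨S.1.submatrix (fun l : Fin (r - 1) =>
          (T i).orderEmbOfFin (hTcard i) l) id, S.2.2 i⟩,
        fun x j => S.1 x.1 j))
    intro S S' hSS
    have h1 := congrArg Prod.fst hSS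
    have h2 := congrArg Prod.snd hSS
    simp only at h1 h2
    apply Subtype.ext
    funext a j
    by_cases ha : a ∈ U
    · obtain ⟨i, -, hai⟩ := Finset.mem_biUnion.1 ha
      have hrange : a ∈ Set.range ((T i).orderEmbOfFin (hTcard i)) := by
        rw [Finset.range_orderEmbOfFin]; exact hai
      obtain ⟨l, hl⟩ := hrange
      have h3 := congrArg Subtype.val (congrFun h1 i)
      have h4 := congrFun (congrFun h3 l) j
      simpa [Matrix.submatrix, hl] using h4
    · exact congrFun (congrFun h2 ⟨a, Finset.mem_compl.2 ha⟩) j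
  have htarget : Nat.card ((Fin c → {A : Matrix (Fin (r - 1)) (Fin (r - 1)) F // A.det = 0}) ×
        ({x // x ∈ (Uᶜ : Finset (Fin (m - 1)))} → Fin (r - 1) → F)) =
      (q ^ ((r - 1) * (r - 1)) - ∏ i ∈ Finset.range (r - 1), (q ^ (r - 1) - q ^ i)) ^ c *
        (q ^ (r - 1)) ^ ((m - 1) - c * (r - 1)) := by
    rw [Nat.card_prod, Nat.card_fun, Nat.card_fun, Nat.card_fun, card_det_zero', ← hq]
    simp only [Nat.card_eq_fintype_card, Fintype.card_fin, Fintype.card_coe, hUc, hq]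
  -- cast the numerator bound to ℚ
  have hProdle : ∏ i ∈ Finset.range (r - 1), (q ^ (r - 1) - q ^ i) ≤ q ^ ((r - 1) * (r - 1)) := by
    calc ∏ i ∈ Finset.range (r - 1), (q ^ (r - 1) - q ^ i)
        ≤ ∏ i ∈ Finset.range (r - 1), q ^ (r - 1) :=
          Finset.prod_le_prod' (fun i _ => Nat.sub_le _ _)
      _ = q ^ ((r - 1) * (r - 1)) := by rw [Finset.prod_const, Finset.card_range, ← pow_mul]
  have hnumQ : (Nat.card {S : Matrix (Fin (m - 1)) (Fin (r - 1)) F // S.rank = r - 1 ∧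
        ∀ i : Fin c,
          (S.submatrix (fun l : Fin (r - 1) =>
            (T i).orderEmbOfFin (hTcard i) l) id).det = 0} : ℚ) ≤
      ((q : ℚ) ^ ((r - 1) * (r - 1)) * (1 - Pk)) ^ c *
        (q : ℚ) ^ ((r - 1) * ((m - 1) - c * (r - 1))) := by
    have h5 : ((q ^ ((r - 1) * (r - 1)) -
          ∏ i ∈ Finset.range (r - 1), (q ^ (r - 1) - q ^ i) : ℕ) : ℚ) =
        (q : ℚ) ^ ((r - 1) * (r - 1)) * (1 - Pk) := by
      rw [Nat.cast_sub hProdle, cast_prod_pow_q (by omega) le_rfl, ← hPk]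
      push_cast
      ring
    calc (Nat.card {S : Matrix (Fin (m - 1)) (Fin (r - 1)) F // S.rank = r - 1 ∧
        ∀ i : Fin c,
          (S.submatrix (fun l : Fin (r - 1) =>
            (T i).orderEmbOfFin (hTcard i) l) id).det = 0} : ℚ)
        ≤ (((q ^ ((r - 1) * (r - 1)) -
              ∏ i ∈ Finset.range (r - 1), (q ^ (r - 1) - q ^ i)) ^ c *
            (q ^ (r - 1)) ^ ((m - 1) - c * (r - 1)) : ℕ) : ℚ) := by
          exact_mod_cast hinj.trans_eq htarget
      _ = ((q : ℚ) ^ ((r - 1) * (r - 1)) * (1 - Pk)) ^ c *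
            (q : ℚ) ^ ((r - 1) * ((m - 1) - c * (r - 1))) := by
          push_cast [h5]
          rw [← pow_mul]
  -- final arithmetic
  rw [hden]
  have hD : (0 : ℚ) < (q : ℚ) ^ ((m - 1) * (r - 1)) * Pn := mul_pos (by positivity) hPn_pos
  calc _ ≤ (((q : ℚ) ^ ((r - 1) * (r - 1)) * (1 - Pk)) ^ c *
        (q : ℚ) ^ ((r - 1) * ((m - 1) - c * (r - 1)))) /
        ((q : ℚ) ^ ((m - 1) * (r - 1)) * Pn) :=
        div_le_div_of_nonneg_right hnumQ hD.le
    _ = (1 - Pk) ^ c / Pn := by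
        have hsplit : (q : ℚ) ^ ((m - 1) * (r - 1)) =
            ((q : ℚ) ^ ((r - 1) * (r - 1))) ^ c *
              (q : ℚ) ^ ((r - 1) * ((m - 1) - c * (r - 1))) := by
          rw [← pow_mul, ← pow_add]
          congr 1
          have h := Nat.add_sub_cancel' hcm
          calc (m - 1) * (r - 1) = (c * (r - 1) + ((m - 1) - c * (r - 1))) * (r - 1) := by
                rw [h]
            _ = (r - 1) * (r - 1) * c + (r - 1) * ((m - 1) - c * (r - 1)) := by ring
        rw [mul_pow, hsplit]
        field_simp
end

section
/- Fix integers m,n,k,r and c ∈ {1,…,⌊(m−1)/(r−1)⌋}. If a rank-r error e is chosen as e = (1,α,…,α^{m−1}) S C with S uniformly random of rank r in F_q^{m×r} and C of rank r, and one (i) picks a column index of C uniformly at random hoping for a nonzero coordinate of e, and (ii) tests c fixed disjoint (r−1)×(r−1) blocks of the normalized support matrix Ŝ for invertibility, then the success probability (nonzero coordinate found AND some block invertible) is at least ((1−q^{−r})/(1−q^{−n})) · (1 − (1−p_{q,r−1,r−1})^c / p_{q,r−1,m−1}). -/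
open Finset Matrix

section Helpers

variable {F : Type*} [Field F] [Fintype F]

lemma aux_card_sigma {n : ℕ} (β : Fin n → Type*) [∀ j, Finite (β j)] :
    Nat.card (Σ j, β j) = ∑ j, Nat.card (β j) := by
  letI := fun j => Fintype.ofFinite (β j)
  simp [Nat.card_eq_fintype_card]

omit [Fintype F] in
lemma aux_rank_iff {a b : ℕ} (M : Matrix (Fin a) (Fin b) F) :
    M.rank = a ↔ LinearIndependent F M := by
  constructor
  · intro h
    change LinearIndependent F M.row
    rw [linearIndependent_iff_card_eq_finrank_span]
    rw [Fintype.card_fin, Set.finrank, ← Matrix.rank_eq_finrank_span_row, h]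
  · intro h
    simpa using h.rank_matrix

lemma aux_card_split {α : Type*} [Finite α] (p s : α → Prop) :
    Nat.card {x // p x ∧ s x} + Nat.card {x // p x ∧ ¬ s x} = Nat.card {x // p x} := by
  classical
  rw [← Nat.card_sum]
  exact Nat.card_congr <| (Equiv.sumCongr (Equiv.subtypeSubtypeEquivSubtypeInter p s).symm
    (Equiv.subtypeSubtypeEquivSubtypeInter p (fun x => ¬ s x)).symm).trans
    (Equiv.sumCompl (fun x : {y // p y} => s x.1))

lemma aux_card_rank {a b : ℕ} (hab : a ≤ b) :
    Nat.card {M : Matrix (Fin a) (Fin b) F // M.rank = a} =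
      ∏ i ∈ range a, (Fintype.card F ^ b - Fintype.card F ^ i) := by
  rw [Nat.card_congr (Equiv.subtypeEquivRight (fun M => aux_rank_iff M)),
    ← Fin.prod_univ_eq_prod_range]
  have h2 := card_linearIndependent (K := F) (V := Fin b → F) (k := a)
    (by simpa [Module.finrank_fintype_fun_eq_card] using hab)
  simp only [Module.finrank_fintype_fun_eq_card, Fintype.card_fin] at h2
  exact h2

lemma aux_card_rank_col {a b : ℕ} (hba : b ≤ a) :
    Nat.card {M : Matrix (Fin a) (Fin b) F // M.rank = b} =
      ∏ i ∈ range b, (Fintype.card F ^ a - Fintype.card F ^ i) := by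
  rw [← aux_card_rank hba]
  exact Nat.card_congr
    ⟨fun M => ⟨M.1ᵀ, by rw [Matrix.rank_transpose]; exact M.2⟩,
     fun M => ⟨M.1ᵀ, by rw [Matrix.rank_transpose]; exact M.2⟩,
     fun M => Subtype.ext (Matrix.transpose_transpose _),
     fun M => Subtype.ext (Matrix.transpose_transpose _)⟩

omit [Fintype F] in
lemma aux_finrank_ker {b : ℕ} (j : Fin b) :
    Module.finrank F
      (LinearMap.ker (LinearMap.proj (R := F) (φ := fun _ : Fin b => F) j)) = b - 1 := by
  have hsurj : Function.Surjective (LinearMap.proj (R := F) (φ := fun _ : Fin b => F) j) :=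
    fun x => ⟨fun _ => x, rfl⟩
  have h := LinearMap.finrank_range_add_finrank_ker
    (LinearMap.proj (R := F) (φ := fun _ : Fin b => F) j)
  rw [LinearMap.range_eq_top.mpr hsurj, finrank_top, Module.finrank_self,
    Module.finrank_fintype_fun_eq_card, Fintype.card_fin] at h
  omega

lemma aux_card_colzero {a b : ℕ} (j : Fin b) :
    Nat.card {M : Matrix (Fin a) (Fin b) F // LinearIndependent F M ∧ ∀ i, M i j = 0} =
      ∏ i ∈ range a, (Fintype.card F ^ (b - 1) - Fintype.card F ^ i) := by
  set W := LinearMap.ker (LinearMap.proj (R := F) (φ := fun _ : Fin b => F) j) with hW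
  have key : ∀ (s : Fin a → W), LinearIndependent F (fun i => ((s i : Fin b → F))) ↔
      LinearIndependent F s := by
    intro s
    exact LinearMap.linearIndependent_iff W.subtype W.ker_subtype
  have e : {M : Matrix (Fin a) (Fin b) F // LinearIndependent F M ∧ ∀ i, M i j = 0} ≃
      {s : Fin a → W // LinearIndependent F s} :=
    { toFun := fun M => ⟨fun i => ⟨M.1 i, M.2.2 i⟩, by
        rw [← key]; exact M.2.1⟩
      invFun := fun s => ⟨fun i k => (s.1 i : Fin b → F) k, by
        refine ⟨(key s.1).mpr s.2, fun i => (s.1 i).2⟩⟩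
      left_inv := fun M => rfl
      right_inv := fun s => rfl }
  rw [Nat.card_congr e]
  by_cases hab : a ≤ b - 1
  · rw [card_linearIndependent (by rw [aux_finrank_ker]; exact hab), aux_finrank_ker,
      ← Fin.prod_univ_eq_prod_range]
  · have h0 : IsEmpty {s : Fin a → W // LinearIndependent F s} := by
      refine ⟨fun s => ?_⟩
      have := s.2.fintype_card_le_finrank
      rw [Fintype.card_fin, aux_finrank_ker] at this
      omega
    rw [Nat.card_of_isEmpty]
    have : b - 1 ∈ range a := mem_range.mpr (by omega)
    rw [eq_comm]; exact prod_eq_zero this (by simp)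

lemma aux_cardA {r n : ℕ}
    (hNX : Nat.card {M : Matrix (Fin r) (Fin n) F // M.rank = r} =
      ∏ i ∈ range r, (Fintype.card F ^ n - Fintype.card F ^ i))
    (hN' : ∀ j : Fin n, Nat.card {M : Matrix (Fin r) (Fin n) F //
        LinearIndependent F M ∧ ∀ i, M i j = 0} =
      ∏ i ∈ range r, (Fintype.card F ^ (n-1) - Fintype.card F ^ i)) :
    Nat.card {p : {M : Matrix (Fin r) (Fin n) F // M.rank = r} × Fin n //
        ∃ i, p.1.1 i p.2 ≠ 0} =
      n * (∏ i ∈ range r, (Fintype.card F ^ n - Fintype.card F ^ i)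
        - ∏ i ∈ range r, (Fintype.card F ^ (n-1) - Fintype.card F ^ i)) := by
  classical
  set X := {M : Matrix (Fin r) (Fin n) F // M.rank = r}
  have e1 : {p : X × Fin n // ∃ i, p.1.1 i p.2 ≠ 0} ≃
      Σ j : Fin n, {C : X // ∃ i, C.1 i j ≠ 0} :=
    (Equiv.subtypeEquiv (Equiv.prodComm X (Fin n)) (fun p => Iff.rfl)).trans
      (Equiv.subtypeProdEquivSigmaSubtype (fun (j : Fin n) (C : X) => ∃ i, C.1 i j ≠ 0))
  rw [Nat.card_congr e1]
  rw [aux_card_sigma]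
  have hterm : ∀ j : Fin n, Nat.card {C : X // ∃ i, C.1 i j ≠ 0} =
      ∏ i ∈ range r, (Fintype.card F ^ n - Fintype.card F ^ i)
        - ∏ i ∈ range r, (Fintype.card F ^ (n-1) - Fintype.card F ^ i) := by
    intro j
    have e2 : {C : X // ∃ i, C.1 i j ≠ 0} ≃
        {M : Matrix (Fin r) (Fin n) F // M.rank = r ∧ ∃ i, M i j ≠ 0} :=
      Equiv.subtypeSubtypeEquivSubtypeInter (fun M : Matrix (Fin r) (Fin n) F => M.rank = r)
        (fun M => ∃ i, M i j ≠ 0)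
    have hz : Nat.card {M : Matrix (Fin r) (Fin n) F // M.rank = r ∧ ¬ ∃ i, M i j ≠ 0} =
        ∏ i ∈ range r, (Fintype.card F ^ (n-1) - Fintype.card F ^ i) := by
      rw [← hN' j]
      refine Nat.card_congr (Equiv.subtypeEquivRight fun M => ?_)
      rw [aux_rank_iff]
      push_neg
      rfl
    have hsplit := aux_card_split (fun M : Matrix (Fin r) (Fin n) F => M.rank = r)
      (fun M => ∃ i, M i j ≠ 0)
    rw [Nat.card_congr e2]
    rw [hz] at hsplit
    have hNX' : Nat.card {x // (fun M : Matrix (Fin r) (Fin n) F => M.rank = r) x} =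
        ∏ i ∈ range r, (Fintype.card F ^ n - Fintype.card F ^ i) := hNX
    rw [hNX'] at hsplit
    exact Nat.eq_sub_of_add_eq hsplit
  rw [Finset.sum_congr rfl (fun j _ => hterm j)]
  simp [mul_comm]

lemma aux_card_det_zero {k : ℕ}
    (hk : Nat.card {M : Matrix (Fin k) (Fin k) F // M.rank = k} =
      ∏ i ∈ range k, (Fintype.card F ^ k - Fintype.card F ^ i)) :
    Nat.card {M : Matrix (Fin k) (Fin k) F // M.det = 0} =
      Fintype.card F ^ (k * k) - ∏ i ∈ range k, (Fintype.card F ^ k - Fintype.card F ^ i) := by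
  classical
  have e : {M : Matrix (Fin k) (Fin k) F // M.det ≠ 0} ≃
      {M : Matrix (Fin k) (Fin k) F // M.rank = k} := by
    refine Equiv.subtypeEquivRight fun M => ?_
    rw [aux_rank_iff]
    change M.det ≠ 0 ↔ LinearIndependent F M.row
    rw [Matrix.linearIndependent_rows_iff_isUnit, Matrix.isUnit_iff_isUnit_det,
      isUnit_iff_ne_zero]
  have hsum : Nat.card {M : Matrix (Fin k) (Fin k) F // M.det = 0} +
      Nat.card {M : Matrix (Fin k) (Fin k) F // M.det ≠ 0} =
      Nat.card (Matrix (Fin k) (Fin k) F) := by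
    rw [← Nat.card_sum]
    exact Nat.card_congr (Equiv.sumCompl _)
  have hfull : Nat.card (Matrix (Fin k) (Fin k) F) = Fintype.card F ^ (k * k) := by
    simp only [Nat.card_eq_fintype_card]
    rw [Fintype.card_congr (Matrix.of (m := Fin k) (n := Fin k) (α := F)).symm]
    simp [pow_mul]
  rw [Nat.card_congr e, hk] at hsum
  omega

lemma aux_card_bad {m1 r1 c : ℕ} (T : Fin c → Finset (Fin m1)) (hTcard : ∀ i, (T i).card = r1)
    (hTdisj : Pairwise (Function.onFun Disjoint T)) :
    Nat.card {S : Matrix (Fin m1) (Fin r1) F // ∀ i,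
        (S.submatrix (fun l : Fin r1 => (T i).orderEmbOfFin (hTcard i) l) id).det = 0} ≤
      (Nat.card {M : Matrix (Fin r1) (Fin r1) F // M.det = 0}) ^ c *
        Fintype.card F ^ (r1 * (m1 - c * r1)) := by
  classical
  set K : Finset (Fin m1) := univ \ univ.biUnion T with hK
  set A := {M : Matrix (Fin r1) (Fin r1) F // M.det = 0}
  have hinj : Function.Injective
      (fun S : {S : Matrix (Fin m1) (Fin r1) F // ∀ i,
          (S.submatrix (fun l : Fin r1 => (T i).orderEmbOfFin (hTcard i) l) id).det = 0} =>
        ((fun i : Fin c => (⟨S.1.submatrix (fun l : Fin r1 => (T i).orderEmbOfFin (hTcard i) l) id,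
            S.2 i⟩ : A), fun (u : ↥K) (l : Fin r1) => S.1 u.1 l) :
          (Fin c → A) × (↥K → Fin r1 → F))) := by
    intro S S' h
    have h1 := congrArg Prod.fst h
    have h2 := congrArg Prod.snd h
    simp only at h1 h2
    apply Subtype.ext
    ext x l
    by_cases hx : x ∈ univ.biUnion T
    · obtain ⟨i, -, hxi⟩ := mem_biUnion.mp hx
      have hrg : x ∈ Set.range ((T i).orderEmbOfFin (hTcard i)) := by
        rw [Finset.range_orderEmbOfFin]; exact_mod_cast hxi
      obtain ⟨l', hl'⟩ := hrg
      have ha := congrArg Subtype.val (congrFun h1 i)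
      have hb := congrFun (congrFun ha l') l
      simpa [hl'] using hb
    · have hxK : x ∈ K := by simp [hK, mem_biUnion] at hx ⊢; exact hx
      exact congrFun (congrFun h2 ⟨x, hxK⟩) l
  have hle := Nat.card_le_card_of_injective _ hinj
  have hcard : Nat.card ((Fin c → A) × (↥K → Fin r1 → F)) =
      (Nat.card A) ^ c * Fintype.card F ^ (r1 * (m1 - c * r1)) := by
    rw [Nat.card_prod, Nat.card_fun, Nat.card_fun, Nat.card_fun]
    have hKcard : Nat.card ↥K = m1 - c * r1 := by
      rw [Nat.card_eq_fintype_card, Fintype.card_coe, hK, card_sdiff_of_subset (subset_univ _),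
        card_univ, Fintype.card_fin, card_biUnion (fun i _ j _ hij => hTdisj hij)]
      simp [hTcard, mul_comm]
    rw [hKcard]
    simp [Nat.card_eq_fintype_card, ← pow_mul, mul_comm]
  rw [hcard] at hle
  exact hle

lemma aux_R1 {q : ℕ} (hq : 2 ≤ q) (k N : ℕ) :
    ∏ i ∈ range k, (1 - (q : ℚ) ^ ((i : ℤ) - (N : ℤ))) =
      (∏ i ∈ range k, ((q : ℚ) ^ N - (q : ℚ) ^ i)) / (q : ℚ) ^ (N * k) := by
  have hq0 : (q : ℚ) ≠ 0 := by positivity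
  have h1 : ∀ i ∈ range k, (1 - (q : ℚ) ^ ((i : ℤ) - (N : ℤ))) =
      ((q : ℚ) ^ N - (q : ℚ) ^ i) / (q : ℚ) ^ N := by
    intro i _
    rw [zpow_sub₀ hq0, zpow_natCast, zpow_natCast]
    field_simp
  rw [prod_congr rfl h1, prod_div_distrib, prod_const, card_range, ← pow_mul]

lemma aux_prod_pos {q : ℕ} (hq : 2 ≤ q) {k N : ℕ} (hkN : k ≤ N) :
    0 < ∏ i ∈ range k, ((q : ℚ) ^ N - (q : ℚ) ^ i) := by
  apply prod_pos
  intro i hi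
  have : (q : ℚ) ^ i < (q : ℚ) ^ N := by
    apply pow_lt_pow_right₀ (by exact_mod_cast hq) (by have := mem_range.mp hi; omega)
  linarith

lemma aux_R3 {q : ℕ} (hq : 2 ≤ q) {r n : ℕ} (hrn : r ≤ n) :
    (∏ i ∈ range r, ((q : ℚ) ^ (n - 1) - (q : ℚ) ^ i)) * ((q : ℚ) ^ n - 1) =
      (∏ i ∈ range r, ((q : ℚ) ^ n - (q : ℚ) ^ i)) * ((q : ℚ) ^ (n - r) - 1) := by
  induction r with
  | zero => simp
  | succ r ih =>
    have hrn' : r ≤ n := by omega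
    obtain ⟨a, ha⟩ : ∃ a, n = r + 1 + a := ⟨n - (r+1), by omega⟩
    have key : ((q : ℚ) ^ (n - 1) - (q : ℚ) ^ r) * ((q : ℚ) ^ (n - r) - 1) =
        ((q : ℚ) ^ n - (q : ℚ) ^ r) * ((q : ℚ) ^ (n - (r + 1)) - 1) := by
      subst ha
      have e1 : r + 1 + a - 1 = r + a := by omega
      have e2 : r + 1 + a - r = a + 1 := by omega
      have e3 : r + 1 + a - (r + 1) = a := by omega
      rw [e1, e2, e3, pow_add, pow_add, pow_add]
      ring
    rw [prod_range_succ, prod_range_succ]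
    calc (∏ i ∈ range r, ((q:ℚ) ^ (n-1) - (q:ℚ) ^ i)) * ((q:ℚ) ^ (n-1) - (q:ℚ) ^ r) *
          ((q:ℚ) ^ n - 1)
        = (∏ i ∈ range r, ((q:ℚ) ^ (n-1) - (q:ℚ) ^ i)) * ((q:ℚ) ^ n - 1) *
          ((q:ℚ) ^ (n-1) - (q:ℚ) ^ r) := by ring
      _ = (∏ i ∈ range r, ((q:ℚ) ^ n - (q:ℚ) ^ i)) * ((q:ℚ) ^ (n-r) - 1) *
          ((q:ℚ) ^ (n-1) - (q:ℚ) ^ r) := by rw [ih hrn']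
      _ = (∏ i ∈ range r, ((q:ℚ) ^ n - (q:ℚ) ^ i)) *
          (((q:ℚ) ^ (n-1) - (q:ℚ) ^ r) * ((q:ℚ) ^ (n-r) - 1)) := by ring
      _ = (∏ i ∈ range r, ((q:ℚ) ^ n - (q:ℚ) ^ i)) *
          (((q:ℚ) ^ n - (q:ℚ) ^ r) * ((q:ℚ) ^ (n-(r+1)) - 1)) := by rw [key]
      _ = (∏ i ∈ range r, ((q:ℚ) ^ n - (q:ℚ) ^ i)) * ((q:ℚ) ^ n - (q:ℚ) ^ r) *
          ((q:ℚ) ^ (n-(r+1)) - 1) := by ring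

lemma aux_cast_prod {q : ℕ} (hq : 2 ≤ q) {k N : ℕ} (h : k ≤ N + 1) :
    ((∏ i ∈ range k, (q ^ N - q ^ i) : ℕ) : ℚ) =
      ∏ i ∈ range k, ((q : ℚ) ^ N - (q : ℚ) ^ i) := by
  rw [Nat.cast_prod]
  refine prod_congr rfl fun i hi => ?_
  have hle : q ^ i ≤ q ^ N := Nat.pow_le_pow_right (by omega)
    (by have := mem_range.mp hi; omega)
  rw [Nat.cast_sub hle]
  push_cast
  ring

lemma aux_prod_mono {q : ℕ} (hq : 2 ≤ q) {k N N' : ℕ} (h : N ≤ N') :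
    ∏ i ∈ range k, (q ^ N - q ^ i) ≤ ∏ i ∈ range k, (q ^ N' - q ^ i) :=
  prod_le_prod' fun i _ => Nat.sub_le_sub_right (Nat.pow_le_pow_right (by omega) h) _

lemma aux_f1 {q r n : ℕ} (hq : 2 ≤ q) (hr : 1 ≤ r) (hrn : r ≤ n) :
    (1 - (q : ℚ) ^ (-(r : ℤ))) / (1 - (q : ℚ) ^ (-(n : ℤ))) =
      ((∏ i ∈ range r, ((q:ℚ)^n - (q:ℚ)^i)) - (∏ i ∈ range r, ((q:ℚ)^(n-1) - (q:ℚ)^i))) /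
        (∏ i ∈ range r, ((q:ℚ)^n - (q:ℚ)^i)) := by
  have hq1 : (1:ℚ) < q := by exact_mod_cast hq
  have key := aux_R3 hq hrn
  have hApos := aux_prod_pos hq hrn
  have hu1 : (1:ℚ) < (q:ℚ)^r := one_lt_pow₀ hq1 (by omega)
  have hv1 : (1:ℚ) < (q:ℚ)^n := one_lt_pow₀ hq1 (by omega)
  have huv : (q:ℚ)^(n-r) * (q:ℚ)^r = (q:ℚ)^n := by
    rw [← pow_add]; congr 1; omega
  rw [_root_.zpow_neg, zpow_natCast, _root_.zpow_neg, zpow_natCast]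
  have hinv : ((q:ℚ)^n)⁻¹ < 1 := inv_lt_one_of_one_lt₀ hv1
  rw [div_eq_div_iff (by nlinarith) hApos.ne']
  field_simp
  linear_combination ((q:ℚ)^r) * key + (∏ i ∈ range r, ((q:ℚ)^n - (q:ℚ)^i)) * huv

lemma aux_f2 {q r1 m1 c : ℕ} (hq : 2 ≤ q) (hcm : c * r1 ≤ m1) (hr1m1 : r1 ≤ m1) :
    (1 - ∏ i ∈ range r1, (1 - (q:ℚ)^((i:ℤ) - (r1:ℤ))))^c /
      (∏ i ∈ range r1, (1 - (q:ℚ)^((i:ℤ) - (m1:ℤ)))) =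
    ((q:ℚ)^(r1*r1) - ∏ i ∈ range r1, ((q:ℚ)^r1 - (q:ℚ)^i))^c * (q:ℚ)^(r1*(m1 - c*r1)) /
      (∏ i ∈ range r1, ((q:ℚ)^m1 - (q:ℚ)^i)) := by
  have hq0 : (q:ℚ) ≠ 0 := by positivity
  have hZpos := aux_prod_pos hq hr1m1
  rw [aux_R1 hq r1 r1, aux_R1 hq r1 m1]
  have hpow : (q:ℚ)^(m1*r1) = (q:ℚ)^(r1*r1*c) * (q:ℚ)^(r1*(m1 - c*r1)) := by
    rw [← pow_add]
    congr 1
    obtain ⟨d, hd⟩ : ∃ d, m1 = c * r1 + d := ⟨m1 - c * r1, by omega⟩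
    subst hd
    rw [show c * r1 + d - c * r1 = d from by omega]
    ring
  have h3 : (1 : ℚ) - (∏ i ∈ range r1, ((q:ℚ)^r1 - (q:ℚ)^i)) / (q:ℚ)^(r1*r1) =
      ((q:ℚ)^(r1*r1) - ∏ i ∈ range r1, ((q:ℚ)^r1 - (q:ℚ)^i)) / (q:ℚ)^(r1*r1) := by
    field_simp
  rw [h3, div_pow, ← pow_mul]
  field_simp
  linear_combination (((q:ℚ)^(r1*r1) - ∏ i ∈ range r1, ((q:ℚ)^r1 - (q:ℚ)^i))^c) * hpow

end Helpers

/-- Proposition 3 (success probability of the decoding algorithm's specialization):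
over a uniformly random choice of a rank-`r` coordinate matrix `C`, a uniformly random
column index `j`, and a uniformly random full-rank normalized support matrix
`Ŝ ∈ F_q^{(m−1)×(r−1)}`, the probability that the chosen column of `C` is nonzero and
that at least one of `c` fixed disjoint `(r−1)×(r−1)` blocks of `Ŝ` is invertible is
at least `((1−q^{−r})/(1−q^{−n})) · (1 − (1−p_{q,r−1,r−1})^c / p_{q,r−1,m−1})`. -/
theorem decoding_success_probability {F : Type*} [Field F] [Fintype F] {m n r c : ℕ}
    (hm : 1 ≤ m) (hr : 1 ≤ r) (hrn : r ≤ n) (hrm : r ≤ m)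
    (hc : 1 ≤ c) (hcm : c * (r - 1) ≤ m - 1)
    (q : ℕ) (hq : q = Fintype.card F)
    (T : Fin c → Finset (Fin (m - 1))) (hTcard : ∀ i, (T i).card = r - 1)
    (hTdisj : Pairwise (Function.onFun Disjoint T)) :
    ((1 - (q : ℚ) ^ (-(r : ℤ))) / (1 - (q : ℚ) ^ (-(n : ℤ)))) *
        (1 - (1 - ∏ i ∈ Finset.range (r - 1),
              (1 - (q : ℚ) ^ ((i : ℤ) - ((r - 1 : ℕ) : ℤ)))) ^ c /
            ∏ i ∈ Finset.range (r - 1),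
              (1 - (q : ℚ) ^ ((i : ℤ) - ((m - 1 : ℕ) : ℤ)))) ≤
      (Nat.card {ω : {C : Matrix (Fin r) (Fin n) F // C.rank = r} × Fin n ×
            {S : Matrix (Fin (m - 1)) (Fin (r - 1)) F // S.rank = r - 1} //
          (∃ i : Fin r, ω.1.1 i ω.2.1 ≠ 0) ∧
          (∃ i : Fin c,
            (ω.2.2.1.submatrix
                (fun l : Fin (r - 1) => (T i).orderEmbOfFin (hTcard i) l) id).det ≠ 0)} : ℚ) /
        (Nat.card ({C : Matrix (Fin r) (Fin n) F // C.rank = r} × Fin n ×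
            {S : Matrix (Fin (m - 1)) (Fin (r - 1)) F // S.rank = r - 1}) : ℚ) := by
  classical
  have hq2 : 2 ≤ q := hq ▸ Fintype.one_lt_card
  have hr1m1 : r - 1 ≤ m - 1 := by omega
  have hn1 : 1 ≤ n := le_trans hr hrn
  subst hq
  set q := Fintype.card F with hqdef
  -- ℕ counts
  have hNX : Nat.card {C : Matrix (Fin r) (Fin n) F // C.rank = r} =
      ∏ i ∈ range r, (q ^ n - q ^ i) := aux_card_rank hrn
  have hNZ : Nat.card {S : Matrix (Fin (m-1)) (Fin (r-1)) F // S.rank = r - 1} =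
      ∏ i ∈ range (r-1), (q ^ (m-1) - q ^ i) := aux_card_rank_col hr1m1
  have hA : Nat.card {p : {C : Matrix (Fin r) (Fin n) F // C.rank = r} × Fin n //
      ∃ i, p.1.1 i p.2 ≠ 0} = n * (∏ i ∈ range r, (q ^ n - q ^ i)
        - ∏ i ∈ range r, (q ^ (n-1) - q ^ i)) :=
    aux_cardA hNX (fun j => aux_card_colzero j)
  -- factorization of the event set
  have e0 : {ω : {C : Matrix (Fin r) (Fin n) F // C.rank = r} × Fin n ×
        {S : Matrix (Fin (m - 1)) (Fin (r - 1)) F // S.rank = r - 1} //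
      (∃ i : Fin r, ω.1.1 i ω.2.1 ≠ 0) ∧
      (∃ i : Fin c, (ω.2.2.1.submatrix
          (fun l : Fin (r - 1) => (T i).orderEmbOfFin (hTcard i) l) id).det ≠ 0)} ≃
      {p : {C : Matrix (Fin r) (Fin n) F // C.rank = r} × Fin n // ∃ i, p.1.1 i p.2 ≠ 0} ×
      {z : {S : Matrix (Fin (m - 1)) (Fin (r - 1)) F // S.rank = r - 1} //
        ∃ i : Fin c, (z.1.submatrix
          (fun l : Fin (r - 1) => (T i).orderEmbOfFin (hTcard i) l) id).det ≠ 0} :=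
    { toFun := fun ω => (⟨(ω.1.1, ω.1.2.1), ω.2.1⟩, ⟨ω.1.2.2, ω.2.2⟩)
      invFun := fun p => ⟨(p.1.1.1, p.1.1.2, p.2.1), p.1.2, p.2.2⟩
      left_inv := fun ω => rfl
      right_inv := fun p => rfl }
  rw [Nat.card_congr e0, Nat.card_prod, Nat.card_prod, Nat.card_prod]
  -- Q-part counts
  have eQ : {z : {S : Matrix (Fin (m - 1)) (Fin (r - 1)) F // S.rank = r - 1} //
      ∃ i : Fin c, (z.1.submatrix
        (fun l : Fin (r - 1) => (T i).orderEmbOfFin (hTcard i) l) id).det ≠ 0} ≃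
      {S : Matrix (Fin (m - 1)) (Fin (r - 1)) F // S.rank = r - 1 ∧
        ∃ i : Fin c, (S.submatrix
          (fun l : Fin (r - 1) => (T i).orderEmbOfFin (hTcard i) l) id).det ≠ 0} :=
    Equiv.subtypeSubtypeEquivSubtypeInter
      (fun S : Matrix (Fin (m - 1)) (Fin (r - 1)) F => S.rank = r - 1)
      (fun S => ∃ i : Fin c, (S.submatrix
        (fun l : Fin (r - 1) => (T i).orderEmbOfFin (hTcard i) l) id).det ≠ 0)
  have hsplitQ := aux_card_split
    (fun S : Matrix (Fin (m - 1)) (Fin (r - 1)) F => S.rank = r - 1)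
    (fun S => ∃ i : Fin c, (S.submatrix
      (fun l : Fin (r - 1) => (T i).orderEmbOfFin (hTcard i) l) id).det ≠ 0)
  have hNZ' : Nat.card {x // (fun S : Matrix (Fin (m - 1)) (Fin (r - 1)) F =>
      S.rank = r - 1) x} = ∏ i ∈ range (r-1), (q ^ (m-1) - q ^ i) := hNZ
  rw [hNZ'] at hsplitQ
  -- bad count bound
  have hbadle : Nat.card {S : Matrix (Fin (m - 1)) (Fin (r - 1)) F // S.rank = r - 1 ∧
      ¬ ∃ i : Fin c, (S.submatrix
        (fun l : Fin (r - 1) => (T i).orderEmbOfFin (hTcard i) l) id).det ≠ 0} ≤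
      (q ^ ((r-1)*(r-1)) - ∏ i ∈ range (r-1), (q ^ (r-1) - q ^ i)) ^ c *
        q ^ ((r-1) * ((m-1) - c * (r-1))) := by
    have h1 : Nat.card {S : Matrix (Fin (m - 1)) (Fin (r - 1)) F // S.rank = r - 1 ∧
        ¬ ∃ i : Fin c, (S.submatrix
          (fun l : Fin (r - 1) => (T i).orderEmbOfFin (hTcard i) l) id).det ≠ 0} ≤
        Nat.card {S : Matrix (Fin (m - 1)) (Fin (r - 1)) F // ∀ i : Fin c,
          (S.submatrix (fun l : Fin (r - 1) => (T i).orderEmbOfFin (hTcard i) l) id).det = 0} := by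
      apply Nat.card_le_card_of_injective
        (fun x => ⟨x.1, by have h := x.2.2; push_neg at h; exact h⟩)
      intro a b hab
      injection hab with h
      exact Subtype.ext h
    refine le_trans h1 ?_
    have h2 := aux_card_bad (F := F) T hTcard hTdisj
    rwa [aux_card_det_zero (aux_card_rank le_rfl)] at h2
  -- switch to ℚ
  rw [hA, Nat.card_congr eQ, hNX, hNZ, Nat.card_eq_fintype_card (α := Fin n), Fintype.card_fin]
  set NX := ∏ i ∈ range r, (q ^ n - q ^ i) with hNXd
  set NX' := ∏ i ∈ range r, (q ^ (n-1) - q ^ i) with hNX'd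
  set NZ := ∏ i ∈ range (r-1), (q ^ (m-1) - q ^ i) with hNZd
  set NS := ∏ i ∈ range (r-1), (q ^ (r-1) - q ^ i) with hNSd
  set good := Nat.card {S : Matrix (Fin (m - 1)) (Fin (r - 1)) F // S.rank = r - 1 ∧
      ∃ i : Fin c, (S.submatrix
        (fun l : Fin (r - 1) => (T i).orderEmbOfFin (hTcard i) l) id).det ≠ 0} with hgoodd
  set bad := Nat.card {S : Matrix (Fin (m - 1)) (Fin (r - 1)) F // S.rank = r - 1 ∧
      ¬ ∃ i : Fin c, (S.submatrix
        (fun l : Fin (r - 1) => (T i).orderEmbOfFin (hTcard i) l) id).det ≠ 0} with hbadd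
  -- cast facts
  have hcNX : ((NX : ℕ) : ℚ) = ∏ i ∈ range r, ((q:ℚ)^n - (q:ℚ)^i) :=
    aux_cast_prod hq2 (by omega)
  have hcNX' : ((NX' : ℕ) : ℚ) = ∏ i ∈ range r, ((q:ℚ)^(n-1) - (q:ℚ)^i) :=
    aux_cast_prod hq2 (by omega)
  have hcNZ : ((NZ : ℕ) : ℚ) = ∏ i ∈ range (r-1), ((q:ℚ)^(m-1) - (q:ℚ)^i) :=
    aux_cast_prod hq2 (by omega)
  have hcNS : ((NS : ℕ) : ℚ) = ∏ i ∈ range (r-1), ((q:ℚ)^(r-1) - (q:ℚ)^i) :=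
    aux_cast_prod hq2 (by omega)
  have hNX'le : NX' ≤ NX := aux_prod_mono hq2 (by omega)
  have hNSle : NS ≤ q ^ ((r-1)*(r-1)) := by
    calc NS ≤ ∏ _i ∈ range (r-1), q ^ (r-1) := prod_le_prod' fun i _ => Nat.sub_le _ _
      _ = q ^ ((r-1)*(r-1)) := by rw [prod_const, card_range, ← pow_mul]
  have hcS : ((q ^ ((r-1)*(r-1)) - NS : ℕ) : ℚ) =
      (q:ℚ)^((r-1)*(r-1)) - ∏ i ∈ range (r-1), ((q:ℚ)^(r-1) - (q:ℚ)^i) := by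
    rw [Nat.cast_sub hNSle, hcNS]; push_cast; ring
  have hbadNZ : bad ≤ NZ := by omega
  have hgoodeq : good = NZ - bad := by omega
  have hNXpos : (0:ℚ) < ((NX : ℕ) : ℚ) := by rw [hcNX]; exact aux_prod_pos hq2 hrn
  have hNZpos : (0:ℚ) < ((NZ : ℕ) : ℚ) := by rw [hcNZ]; exact aux_prod_pos hq2 hr1m1
  have hnpos : (0:ℚ) < (n : ℚ) := by exact_mod_cast hn1
  -- rational versions of the two factors
  have hf1 := aux_f1 hq2 hr hrn
  have hf2 := aux_f2 (q := q) hq2 hcm hr1m1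
  have hf1' : (1 - (q : ℚ) ^ (-(r : ℤ))) / (1 - (q : ℚ) ^ (-(n : ℤ))) =
      (((NX : ℕ) : ℚ) - ((NX' : ℕ) : ℚ)) / ((NX : ℕ) : ℚ) := by
    rw [hcNX, hcNX', hf1]
  have hf1nonneg : (0:ℚ) ≤ (1 - (q : ℚ) ^ (-(r : ℤ))) / (1 - (q : ℚ) ^ (-(n : ℤ))) := by
    rw [hf1']
    apply div_nonneg _ hNXpos.le
    rw [sub_nonneg]
    exact_mod_cast hNX'le
  -- bound the second factor
  have hstep : (1 - (1 - ∏ i ∈ Finset.range (r - 1),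
        (1 - (q : ℚ) ^ ((i : ℤ) - ((r - 1 : ℕ) : ℤ)))) ^ c /
      ∏ i ∈ Finset.range (r - 1),
        (1 - (q : ℚ) ^ ((i : ℤ) - ((m - 1 : ℕ) : ℤ)))) ≤
      (((NZ : ℕ) : ℚ) - ((bad : ℕ) : ℚ)) / ((NZ : ℕ) : ℚ) := by
    have heq : (((NZ : ℕ) : ℚ) - ((bad : ℕ) : ℚ)) / ((NZ : ℕ) : ℚ) =
        1 - ((bad : ℕ) : ℚ) / ((NZ : ℕ) : ℚ) := by
      field_simp
    rw [heq, hf2, sub_le_sub_iff_left, ← hcNZ]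
    rw [div_le_div_iff_of_pos_right hNZpos]
    calc ((bad : ℕ) : ℚ) ≤
          (((q ^ ((r-1)*(r-1)) - NS) ^ c * q ^ ((r-1) * ((m-1) - c * (r-1))) : ℕ) : ℚ) := by
            exact_mod_cast hbadle
        _ = ((q:ℚ)^((r-1)*(r-1)) - ∏ i ∈ range (r-1), ((q:ℚ)^(r-1) - (q:ℚ)^i))^c *
            (q:ℚ)^((r-1)*((m-1) - c*(r-1))) := by
          push_cast [hcS]
          ring
  -- combine
  calc ((1 - (q : ℚ) ^ (-(r : ℤ))) / (1 - (q : ℚ) ^ (-(n : ℤ)))) *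
        (1 - (1 - ∏ i ∈ Finset.range (r - 1),
              (1 - (q : ℚ) ^ ((i : ℤ) - ((r - 1 : ℕ) : ℤ)))) ^ c /
            ∏ i ∈ Finset.range (r - 1),
              (1 - (q : ℚ) ^ ((i : ℤ) - ((m - 1 : ℕ) : ℤ))))
      ≤ ((1 - (q : ℚ) ^ (-(r : ℤ))) / (1 - (q : ℚ) ^ (-(n : ℤ)))) *
        ((((NZ : ℕ) : ℚ) - ((bad : ℕ) : ℚ)) / ((NZ : ℕ) : ℚ)) :=
      mul_le_mul_of_nonneg_left hstep hf1nonneg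
    _ = ((n * (NX - NX') : ℕ) : ℚ) * ((good : ℕ) : ℚ) /
        (((NX : ℕ) : ℚ) * ((n : ℕ) * ((NZ : ℕ) : ℚ))) := by
      rw [hf1', hgoodeq, Nat.cast_mul, Nat.cast_sub hNX'le, Nat.cast_sub hbadNZ]
      field_simp
    _ = ((n * (NX - NX') * good : ℕ) : ℚ) / ((NX * (n * NZ) : ℕ) : ℚ) := by
      push_cast [Nat.cast_sub hNX'le]
      ring
end
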